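/- arXiv:2605.06120 — 4 statements merged into one kernel-verified Lean document; each statement's English description precedes it below -/
import Mathlib

section
/- Let X be a real Banach space and let μ : X → ℝ be uniformly weakly continuous on the closed unit ball of X. Let Φ be an element of the closed unit ball of X**. Then there exists a real number L such that for every net (a_λ) contained in the closed unit ball of X with ι(a_λ) converging to Φ in the weak* topology σ(X**, X*), the net (μ(a_λ)) converges to L. In particular, the limit lim_λ μ(a_λ) exists and depends only on Φ, not on the chosen net. -/
open Filter Topology NormedSpace

/-- If `μ : X → ℝ` is uniformly weakly continuous on the closed unit ball
of a real Banach space `X` and `Φ` belongs to the closed unit ball of the bidual, then there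
is a real number `L` such that for every net `(a_λ)` in the closed unit ball of `X` whose
image under the canonical embedding weak*-converges to `Φ`, the net `(μ(a_λ))` converges
to `L`. -/
theorem stmt_2 (X : Type*) [NormedAddCommGroup X] [NormedSpace ℝ X] [CompleteSpace X]
    (μ : X → ℝ)
    (hucont : ∀ ε > (0 : ℝ), ∃ δ > (0 : ℝ), ∃ (m : ℕ) (f : Fin m → StrongDual ℝ X),
      ∀ a b : X, ‖a‖ ≤ 1 → ‖b‖ ≤ 1 → (∀ i, |f i a - f i b| < δ) → |μ a - μ b| < ε)
    (Φ : StrongDual ℝ (StrongDual ℝ X)) (hΦ : ‖Φ‖ ≤ 1) :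
    ∃ L : ℝ, ∀ (κ : Type*) (l : Filter κ) [l.NeBot] (a : κ → X),
      (∀ i, ‖a i‖ ≤ 1) →
      Filter.Tendsto
        (fun i => StrongDual.toWeakDual (NormedSpace.inclusionInDoubleDual ℝ X (a i))) l
        (nhds (StrongDual.toWeakDual Φ)) →
      Filter.Tendsto (fun i => μ (a i)) l (nhds L) := by
  classical
  set g : X → WeakDual ℝ (StrongDual ℝ X) :=
    fun x => StrongDual.toWeakDual (NormedSpace.inclusionInDoubleDual ℝ X x) with hg
  set F : Filter X :=
    (Filter.comap g (nhds (StrongDual.toWeakDual Φ))) ⊓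
      Filter.principal {x : X | ‖x‖ ≤ 1} with hFdef
  by_cases hne : F.NeBot
  · -- the image filter is Cauchy
    have hC : Cauchy (F.map μ) := by
      rw [Metric.cauchy_iff]
      refine ⟨Filter.map_neBot, ?_⟩
      intro ε hε
      obtain ⟨δ, hδ, m, f, hf⟩ := hucont ε hε
      set V : Set (WeakDual ℝ (StrongDual ℝ X)) :=
        {Ψ | ∀ i, |Ψ (f i) - Φ (f i)| < δ / 2} with hVdef
      have hVopen : IsOpen V := by
        have : V = ⋂ i, (fun Ψ : WeakDual ℝ (StrongDual ℝ X) => Ψ (f i)) ⁻¹'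
            (Metric.ball (Φ (f i)) (δ / 2)) := by
          ext Ψ
          simp [hVdef, Real.dist_eq]
        rw [this]
        exact isOpen_iInter_of_finite fun i =>
          (WeakDual.eval_continuous (f i)).isOpen_preimage _ Metric.isOpen_ball
      have hVmem : V ∈ nhds (StrongDual.toWeakDual Φ) := by
        refine hVopen.mem_nhds ?_
        intro i
        simpa using half_pos hδ
      set U : Set X := g ⁻¹' V ∩ {x : X | ‖x‖ ≤ 1} with hUdef
      have hUF : U ∈ F := by
        exact Filter.inter_mem_inf (Filter.preimage_mem_comap hVmem)
          (Filter.mem_principal_self _)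
      refine ⟨μ '' U, Filter.image_mem_map hUF, ?_⟩
      rintro _ ⟨x, hx, rfl⟩ _ ⟨y, hy, rfl⟩
      rw [Real.dist_eq]
      refine hf x y hx.2 hy.2 ?_
      intro i
      have hx1 : |f i x - Φ (f i)| < δ / 2 := by
        have := hx.1 i
        simpa [hg, NormedSpace.dual_def] using this
      have hy1 : |f i y - Φ (f i)| < δ / 2 := by
        have := hy.1 i
        simpa [hg, NormedSpace.dual_def] using this
      calc |f i x - f i y| ≤ |f i x - Φ (f i)| + |Φ (f i) - f i y| := abs_sub_le _ _ _
        _ < δ / 2 + δ / 2 := by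
            rw [abs_sub_comm (Φ (f i))]
            exact add_lt_add hx1 hy1
        _ = δ := add_halves δ
    obtain ⟨L, hL⟩ := CompleteSpace.complete hC
    refine ⟨L, ?_⟩
    intro κ l hl a ha hconv
    have h1 : Filter.map a l ≤ F := by
      refine le_inf (Filter.map_le_iff_le_comap.mp hconv) ?_
      have hev : ∀ᶠ i in l, a i ∈ {x : X | ‖x‖ ≤ 1} := Filter.Eventually.of_forall ha
      exact Filter.le_principal_iff.mpr hev
    have : Filter.map (fun i => μ (a i)) l ≤ F.map μ := by
      rw [show (fun i => μ (a i)) = μ ∘ a from rfl, ← Filter.map_map]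
      exact Filter.map_mono h1
    exact this.trans hL
  · -- F = ⊥ : the hypotheses of the conclusion are vacuous
    refine ⟨0, ?_⟩
    intro κ l hl a ha hconv
    have h1 : Filter.map a l ≤ F := by
      refine le_inf (Filter.map_le_iff_le_comap.mp hconv) ?_
      have hev : ∀ᶠ i in l, a i ∈ {x : X | ‖x‖ ≤ 1} := Filter.Eventually.of_forall ha
      exact Filter.le_principal_iff.mpr hev
    rw [Filter.not_neBot] at hne
    rw [hne, le_bot_iff] at h1
    exact absurd h1 (Filter.map_neBot (f := l) (m := a)).ne
end

section
/- Let A be a unital C*-algebra and let μ : A → ℝ be a function such that for every self-adjoint a ∈ A, the restriction of μ to the norm closure of the non-unital subalgebra of A generated by a is additive and ℝ-homogeneous. Then μ is finitely additive on orthogonal projections: for any mutually orthogonal projections p₁, …, pₙ in A, one has μ(p₁ + p₂ + ⋯ + pₙ) = μ(p₁) + μ(p₂) + ⋯ + μ(pₙ). -/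
open Polynomial

set_option maxHeartbeats 2000000 in
theorem key_lemma (A : Type*) [CStarAlgebra A] (μ : A → ℝ)
    (hloc : ∀ a : A, star a = a →
      (∀ y ∈ closure {y : A | ∃ q : Polynomial ℝ, q.coeff 0 = 0 ∧ Polynomial.aeval a q = y},
       ∀ z ∈ closure {y : A | ∃ q : Polynomial ℝ, q.coeff 0 = 0 ∧ Polynomial.aeval a q = y},
        μ (y + z) = μ y + μ z) ∧
      (∀ y ∈ closure {y : A | ∃ q : Polynomial ℝ, q.coeff 0 = 0 ∧ Polynomial.aeval a q = y},
       ∀ t : ℝ, μ (t • y) = t * μ y))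
    (q p : A) (hqs : star q = q) (hps : star p = p)
    (hqi : q * q = q) (hpi : p * p = p) (hqp : q * p = 0) (hpq : p * q = 0) :
    μ (q + p) = μ q + μ p := by
  set a : A := q + p + p with ha_def
  have ha : star a = a := by simp [ha_def, hqs, hps]
  have hsq : a * a = q + (p + p + p + p) := by
    have : (q + p + p) * (q + p + p) = q*q + q*p + q*p + p*q + p*p + p*p + p*q + p*p + p*p := by
      noncomm_ring
    rw [ha_def, this, hqi, hpi, hqp, hpq]
    abel
  have hqmem : q ∈ closure {y : A | ∃ r : Polynomial ℝ, r.coeff 0 = 0 ∧ Polynomial.aeval a r = y} := by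
    apply subset_closure
    refine ⟨(2 : ℝ) • X - X ^ 2, by simp, ?_⟩
    rw [map_sub, map_smul, map_pow, sq, aeval_X, hsq, two_smul, ha_def]
    abel
  have hpmem : p ∈ closure {y : A | ∃ r : Polynomial ℝ, r.coeff 0 = 0 ∧ Polynomial.aeval a r = y} := by
    apply subset_closure
    refine ⟨(1/2 : ℝ) • (X ^ 2 - X), by simp, ?_⟩
    rw [map_smul, map_sub, map_pow, sq, aeval_X, hsq]
    have h2p : q + (p + p + p + p) - a = p + p := by rw [ha_def]; abel
    rw [h2p, ← two_smul ℝ p, smul_smul]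
    norm_num
  exact (hloc a ha).1 q hqmem p hpmem

/-- Let `μ : A → ℝ` on a unital C*-algebra `A` be such that for every
self-adjoint `a ∈ A`, the restriction of `μ` to the norm closure of the non-unital
subalgebra generated by `a` (the closure of the set of values at `a` of real polynomials
with zero constant term) is additive and `ℝ`-homogeneous. Then `μ` is finitely additive
on mutually orthogonal projections. -/
theorem stmt_6 (A : Type*) [CStarAlgebra A] (μ : A → ℝ)
    (hloc : ∀ a : A, star a = a →
      (∀ y ∈ closure {y : A | ∃ q : Polynomial ℝ, q.coeff 0 = 0 ∧ Polynomial.aeval a q = y},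
       ∀ z ∈ closure {y : A | ∃ q : Polynomial ℝ, q.coeff 0 = 0 ∧ Polynomial.aeval a q = y},
        μ (y + z) = μ y + μ z) ∧
      (∀ y ∈ closure {y : A | ∃ q : Polynomial ℝ, q.coeff 0 = 0 ∧ Polynomial.aeval a q = y},
       ∀ t : ℝ, μ (t • y) = t * μ y)) :
    ∀ (n : ℕ) (p : Fin n → A), (∀ i, star (p i) = p i) → (∀ i, p i * p i = p i) →
      (∀ i j, i ≠ j → p i * p j = 0) →
      μ (∑ i : Fin n, p i) = ∑ i : Fin n, μ (p i) := by
  have hzero : μ 0 = 0 := by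
    have h0mem : (0 : A) ∈ closure {y : A | ∃ r : Polynomial ℝ, r.coeff 0 = 0 ∧ Polynomial.aeval (0 : A) r = y} :=
      subset_closure ⟨X, by simp, by simp⟩
    have := (hloc 0 (by simp)).2 0 h0mem 0
    simpa using this
  intro n
  induction n with
  | zero => intro p _ _ _; simpa using hzero
  | succ n ih =>
    intro p hsa hidem horth
    rw [Fin.sum_univ_castSucc, Fin.sum_univ_castSucc]
    set q : A := ∑ i : Fin n, p i.castSucc with hq_def
    have hqs : star q = q := by simp [hq_def, hsa]
    have hqi : q * q = q := by
      rw [hq_def, Finset.sum_mul_sum]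
      refine Finset.sum_congr rfl fun i _ => ?_
      rw [Finset.sum_eq_single i
        (fun j _ hj => horth _ _ (fun h => hj (Fin.castSucc_injective n h.symm)))
        (by simp)]
      exact hidem _
    have hqp : q * p (Fin.last n) = 0 := by
      rw [hq_def, Finset.sum_mul]
      exact Finset.sum_eq_zero fun i _ =>
        horth _ _ (Fin.castSucc_lt_last i).ne
    have hpq : p (Fin.last n) * q = 0 := by
      rw [hq_def, Finset.mul_sum]
      exact Finset.sum_eq_zero fun i _ =>
        horth _ _ (Fin.castSucc_lt_last i).ne'
    rw [key_lemma A μ hloc q (p (Fin.last n)) hqs (hsa _) hqi (hidem _) hqp hpq]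
    rw [ih (fun i => p i.castSucc) (fun i => hsa _) (fun i => hidem _)
      (fun i j hij => horth _ _ (fun h => hij (Fin.castSucc_injective n h)))]
end

section
/- Let A be a unital C*-algebra and let μ : A → ℝ be a function such that for every self-adjoint a ∈ A, the restriction of μ to the norm closure of the non-unital subalgebra of A generated by a is additive and ℝ-homogeneous. Then for any mutually orthogonal projections p₁, …, pₙ in A and any real numbers α₁, …, αₙ, one has μ(α₁p₁ + α₂p₂ + ⋯ + αₙpₙ) = α₁μ(p₁) + α₂μ(p₂) + ⋯ + αₙμ(pₙ). -/
/-- Let `μ : A → ℝ` on a unital C*-algebra `A` be such that for every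
self-adjoint `a ∈ A`, the restriction of `μ` to the norm closure of the non-unital
subalgebra generated by `a` (the closure of the set of values at `a` of real polynomials
with zero constant term) is additive and `ℝ`-homogeneous. Then `μ` is real-linear on
finite real linear combinations of mutually orthogonal projections. -/
theorem stmt_7 (A : Type*) [CStarAlgebra A] (μ : A → ℝ)
    (hloc : ∀ a : A, star a = a →
      (∀ y ∈ closure {y : A | ∃ q : Polynomial ℝ, q.coeff 0 = 0 ∧ Polynomial.aeval a q = y},
       ∀ z ∈ closure {y : A | ∃ q : Polynomial ℝ, q.coeff 0 = 0 ∧ Polynomial.aeval a q = y},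
        μ (y + z) = μ y + μ z) ∧
      (∀ y ∈ closure {y : A | ∃ q : Polynomial ℝ, q.coeff 0 = 0 ∧ Polynomial.aeval a q = y},
       ∀ t : ℝ, μ (t • y) = t * μ y)) :
    ∀ (n : ℕ) (p : Fin n → A) (α : Fin n → ℝ),
      (∀ i, star (p i) = p i) → (∀ i, p i * p i = p i) →
      (∀ i j, i ≠ j → p i * p j = 0) →
      μ (∑ i : Fin n, α i • p i) = ∑ i : Fin n, α i * μ (p i) := by
  intro n p α hsa hidem horth
  set c : Fin n → ℝ := fun i => (i.val : ℝ) + 1 with hc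
  have hcinj : Function.Injective c := by
    intro i j h
    simp only [hc, add_left_inj] at h
    exact Fin.val_injective (Nat.cast_injective h)
  have hcne : ∀ i, c i ≠ 0 := by
    intro i
    have : (0:ℝ) < (i.val : ℝ) + 1 := by positivity
    exact ne_of_gt this
  set a : A := ∑ i, c i • p i with ha
  have hastar : star a = a := by
    rw [ha, star_sum]
    refine Finset.sum_congr rfl fun i _ => ?_
    rw [star_smul, hsa, star_trivial]
  -- powers of a
  have hpow : ∀ k : ℕ, a ^ (k + 1) = ∑ i, (c i ^ (k + 1)) • p i := by
    intro k
    induction k with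
    | zero => simp [ha]
    | succ k ih =>
      rw [pow_succ, ih, ha, Finset.sum_mul_sum]
      refine Finset.sum_congr rfl fun i _ => ?_
      rw [Finset.sum_eq_single i ?h1 ?h2]
      · rw [smul_mul_smul_comm, hidem, ← pow_succ]
      case h1 =>
        intro j _ hj
        rw [smul_mul_smul_comm, horth i j (Ne.symm hj), smul_zero]
      case h2 => intro h; exact absurd (Finset.mem_univ i) h
  -- aeval formula
  have haev : ∀ q : Polynomial ℝ, q.coeff 0 = 0 →
      Polynomial.aeval a q = ∑ i, (q.eval (c i)) • p i := by
    intro q hq0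
    rw [Polynomial.aeval_eq_sum_range]
    have hterm : ∀ k : ℕ, q.coeff k • a ^ k = ∑ i, (q.coeff k * c i ^ k) • p i := by
      intro k
      cases k with
      | zero => simp [hq0]
      | succ k =>
        rw [hpow k, Finset.smul_sum]
        exact Finset.sum_congr rfl fun i _ => by rw [smul_smul]
    rw [Finset.sum_congr rfl (fun k _ => hterm k), Finset.sum_comm]
    refine Finset.sum_congr rfl fun i _ => ?_
    rw [Polynomial.eval_eq_sum_range, Finset.sum_smul]
  set S : Set A := {y : A | ∃ q : Polynomial ℝ, q.coeff 0 = 0 ∧ Polynomial.aeval a q = y}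
    with hS
  -- every linear combination of the p i lies in S
  have hmem : ∀ β : Fin n → ℝ, (∑ i, β i • p i) ∈ S := by
    intro β
    set v : Fin (n + 1) → ℝ := Fin.cons 0 c with hv
    have hvinj' : Function.Injective v := by
      intro i j h
      induction i using Fin.cases with
      | zero =>
        induction j using Fin.cases with
        | zero => rfl
        | succ j =>
          simp only [hv, Fin.cons_zero, Fin.cons_succ] at h
          exact absurd h.symm (hcne j)
      | succ i =>
        induction j using Fin.cases with
        | zero =>
          simp only [hv, Fin.cons_zero, Fin.cons_succ] at h
          exact absurd h (hcne i)
        | succ j =>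
          simp only [hv, Fin.cons_succ] at h
          exact congrArg Fin.succ (hcinj h)
    have hvinj : Set.InjOn v (Finset.univ : Finset (Fin (n+1))) := hvinj'.injOn
    set r : Fin (n + 1) → ℝ := Fin.cons 0 β with hr
    have h0 : v 0 = 0 := by simp [hv]
    have h00 := Lagrange.eval_interpolate_at_node r hvinj (Finset.mem_univ (0 : Fin (n+1)))
    refine ⟨Lagrange.interpolate Finset.univ v r, ?_, ?_⟩
    · rw [Polynomial.coeff_zero_eq_eval_zero, ← h0, h00]
      simp [hr, h0]
    · rw [haev _ ?hcz]
      case hcz =>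
        rw [Polynomial.coeff_zero_eq_eval_zero, ← h0, h00]
        simp [hr, h0]
      refine Finset.sum_congr rfl fun i _ => ?_
      have hvs : c i = v i.succ := by simp [hv]
      rw [hvs, Lagrange.eval_interpolate_at_node r hvinj (Finset.mem_univ _)]
      simp [hr, h0]
  have hsub : S ⊆ closure S := subset_closure
  obtain ⟨hadd, hhom⟩ := hloc a hastar
  have h0S : (0 : A) ∈ S := by
    have := hmem 0
    simpa using this
  have hμ0 : μ 0 = 0 := by
    have := hhom 0 (hsub h0S) 0
    simpa using this
  -- partial sums are in S
  have hpart : ∀ t : Finset (Fin n), (∑ i ∈ t, α i • p i) ∈ S := by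
    intro t
    have hmt := hmem (fun i => if i ∈ t then α i else 0)
    have he : (∑ i, (if i ∈ t then α i else 0) • p i) = ∑ i ∈ t, α i • p i := by
      rw [← Finset.sum_filter_add_sum_filter_not Finset.univ (· ∈ t)]
      have h1 : ∀ i ∈ Finset.univ.filter (· ∈ t), (if i ∈ t then α i else 0) • p i
          = α i • p i := by intro i hi; simp at hi; simp [hi]
      have h2 : ∀ i ∈ Finset.univ.filter (¬ · ∈ t), (if i ∈ t then α i else 0) • p i
          = 0 := by intro i hi; simp at hi; simp [hi]
      rw [Finset.sum_congr rfl h1, Finset.sum_congr rfl h2, Finset.sum_const_zero, add_zero]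
      congr 1
      ext i
      simp
    rwa [he] at hmt
  have hsingle : ∀ j, (p j) ∈ S := by
    intro j
    have hmt := hmem (fun i => if i = j then 1 else 0)
    have he : (∑ i, (if i = j then (1:ℝ) else 0) • p i) = p j := by
      rw [Finset.sum_eq_single j] <;> simp +contextual
    rwa [he] at hmt
  -- main induction
  have main : ∀ t : Finset (Fin n),
      μ (∑ i ∈ t, α i • p i) = ∑ i ∈ t, α i * μ (p i) := by
    intro t
    induction t using Finset.induction_on with
    | empty => simpa using hμ0
    | @insert j t hj ih =>
      rw [Finset.sum_insert hj, Finset.sum_insert hj]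
      have h1 : (α j • p j) ∈ S := by
        have hmt := hmem (fun i => if i = j then α j else 0)
        have he : (∑ i, (if i = j then α j else 0) • p i) = α j • p j := by
          rw [Finset.sum_eq_single j] <;> simp +contextual
        rwa [he] at hmt
      rw [hadd _ (hsub h1) _ (hsub (hpart t)), ih,
        hhom _ (hsub (hsingle j)) (α j)]
  exact main Finset.univ
end

section
/- There exists a function μ : M₂(ℂ) → ℝ on the C*-algebra of 2×2 complex matrices with the following properties: (i) μ is bounded on the set of self-adjoint matrices in the closed unit ball; (ii) μ(t·a) = t·μ(a) for every t ∈ ℝ and every self-adjoint matrix a; (iii) μ(a + b) = μ(a) + μ(b) for all commuting self-adjoint matrices a, b (i.e. with ab = ba); but (iv) μ is not additive on self-adjoint matrices: there exist self-adjoint matrices a, b ∈ M₂(ℂ) with μ(a + b) ≠ μ(a) + μ(b). -/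
open scoped Matrix.Norms.L2Operator

noncomputable def qf (x y : ℝ) : ℝ := x ^ 3 / (x ^ 2 + y ^ 2)

lemma qf_smul (t x y : ℝ) : qf (t * x) (t * y) = t * qf x y := by
  unfold qf
  by_cases h : x ^ 2 + y ^ 2 = 0
  · have hx : x = 0 := by nlinarith [sq_nonneg x, sq_nonneg y]
    have hy : y = 0 := by nlinarith [sq_nonneg x, sq_nonneg y]
    simp [hx, hy]
  · by_cases ht : t = 0
    · simp [ht]
    · have h2 : (t * x) ^ 2 + (t * y) ^ 2 = t ^ 2 * (x ^ 2 + y ^ 2) := by ring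
      rw [h2]
      field_simp

lemma qf_add (x1 y1 x2 y2 : ℝ) (h : x1 * y2 = x2 * y1) :
    qf (x1 + x2) (y1 + y2) = qf x1 y1 + qf x2 y2 := by
  by_cases h0 : x1 = 0 ∧ y1 = 0
  · obtain ⟨hx, hy⟩ := h0
    simp [hx, hy, qf]
  · have hs : ∃ s : ℝ, x2 = s * x1 ∧ y2 = s * y1 := by
      by_cases hx : x1 = 0
      · have hy : y1 ≠ 0 := fun hy => h0 ⟨hx, hy⟩
        refine ⟨y2 / y1, ?_, by field_simp⟩
        have : x2 * y1 = 0 := by rw [← h, hx]; ring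
        rcases mul_eq_zero.mp this with h' | h'
        · simp [h', hx]
        · exact absurd h' hy
      · refine ⟨x2 / x1, by field_simp, ?_⟩
        field_simp
        linarith [h]
    obtain ⟨s, hx2, hy2⟩ := hs
    subst hx2 hy2
    have e1 : x1 + s * x1 = (1 + s) * x1 := by ring
    have e2 : y1 + s * y1 = (1 + s) * y1 := by ring
    rw [e1, e2, qf_smul, qf_smul]
    ring

lemma qf_bound (x y : ℝ) : |qf x y| ≤ |x| := by
  unfold qf
  by_cases h : x ^ 2 + y ^ 2 = 0
  · have hx : x = 0 := by nlinarith [sq_nonneg x, sq_nonneg y]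
    simp [hx]
  · have hpos : 0 < x ^ 2 + y ^ 2 := lt_of_le_of_ne (by positivity) (Ne.symm h)
    rw [abs_div, abs_of_pos hpos, div_le_iff₀ hpos]
    have h3 : |x ^ 3| = |x| ^ 3 := by rw [abs_pow]
    rw [h3]
    nlinarith [sq_abs x, abs_nonneg x, sq_nonneg y]

lemma coord_le_norm (y : EuclideanSpace ℂ (Fin 2)) (i : Fin 2) : ‖y i‖ ≤ ‖y‖ := by
  rw [EuclideanSpace.norm_eq]
  have := Real.sqrt_le_sqrt (show ‖y i‖ ^ 2 ≤ ∑ j, ‖y j‖ ^ 2 from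
    Finset.single_le_sum (f := fun j => ‖y j‖ ^ 2) (fun j _ => by positivity) (Finset.mem_univ i))
  calc ‖y i‖ = Real.sqrt (‖y i‖ ^ 2) := by rw [Real.sqrt_sq (norm_nonneg _)]
    _ ≤ _ := this

lemma entry_le_norm (a : Matrix (Fin 2) (Fin 2) ℂ) (i j : Fin 2) : ‖a i j‖ ≤ ‖a‖ := by
  have h := Matrix.l2_opNorm_mulVec a (EuclideanSpace.single j 1)
  rw [EuclideanSpace.norm_single, norm_one, mul_one] at h
  refine le_trans ?_ (le_trans (coord_le_norm _ i) h)
  have : ((EuclideanSpace.equiv (Fin 2) ℂ).symm (a.mulVec (EuclideanSpace.single j 1))) i = a i j := by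
    simp [Matrix.mulVec, dotProduct, EuclideanSpace.single_apply]
  rw [this]

/-- There is a quasi-linear functional on `M₂(ℂ)` (endowed with its
C*-algebra structure, i.e. the `ℓ²`-operator norm and conjugate-transpose involution)
which is bounded on the self-adjoint part of the closed unit ball, homogeneous and
additive on commuting self-adjoint matrices, but fails to be additive on self-adjoint
matrices. -/
theorem stmt_11 :
    ∃ μ : Matrix (Fin 2) (Fin 2) ℂ → ℝ,
      (∃ C : ℝ, ∀ a : Matrix (Fin 2) (Fin 2) ℂ, star a = a → ‖a‖ ≤ 1 → |μ a| ≤ C) ∧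
      (∀ (t : ℝ) (a : Matrix (Fin 2) (Fin 2) ℂ), star a = a → μ (t • a) = t * μ a) ∧
      (∀ a b : Matrix (Fin 2) (Fin 2) ℂ, star a = a → star b = b → a * b = b * a →
        μ (a + b) = μ a + μ b) ∧
      (∃ a b : Matrix (Fin 2) (Fin 2) ℂ, star a = a ∧ star b = b ∧
        μ (a + b) ≠ μ a + μ b) := by
  refine ⟨fun a => qf (a 0 1).re (a 0 1).im, ⟨1, fun a _ ha => ?_⟩, ?_, ?_, ?_⟩
  · calc |qf (a 0 1).re (a 0 1).im| ≤ |(a 0 1).re| := qf_bound _ _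
      _ ≤ ‖a 0 1‖ := Complex.abs_re_le_norm _
      _ ≤ ‖a‖ := entry_le_norm a 0 1
      _ ≤ 1 := ha
  · intro t a _
    show qf ((t • a) 0 1).re ((t • a) 0 1).im = t * qf (a 0 1).re (a 0 1).im
    have h : (t • a) 0 1 = t • (a 0 1) := rfl
    rw [h, Complex.smul_re, Complex.smul_im, smul_eq_mul, smul_eq_mul, qf_smul]
  · intro a b ha hb hab
    have ha' : a 1 0 = starRingEnd ℂ (a 0 1) := by
      conv_lhs => rw [← ha]
      rfl
    have hb' : b 1 0 = starRingEnd ℂ (b 0 1) := by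
      conv_lhs => rw [← hb]
      rfl
    have h00 : (a * b) 0 0 = (b * a) 0 0 := by rw [hab]
    simp only [Matrix.mul_apply, Fin.sum_univ_two] at h00
    have key : (a 0 1).re * (b 0 1).im = (b 0 1).re * (a 0 1).im := by
      rw [ha', hb'] at h00
      have := congrArg Complex.im h00
      simp only [Complex.add_im, Complex.mul_im, Complex.conj_re, Complex.conj_im] at this
      linarith
    show qf ((a + b) 0 1).re ((a + b) 0 1).im = qf (a 0 1).re (a 0 1).im + qf (b 0 1).re (b 0 1).im
    have h' : ((a + b) 0 1) = a 0 1 + b 0 1 := rfl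
    rw [h', Complex.add_re, Complex.add_im, qf_add _ _ _ _ key]
  · refine ⟨!![0, 1; 1, 0], !![0, -Complex.I; Complex.I, 0], ?_, ?_, ?_⟩
    · ext i j
      fin_cases i <;> fin_cases j <;>
        simp [Matrix.star_apply, Matrix.conjTranspose_apply]
    · ext i j
      fin_cases i <;> fin_cases j <;>
        simp [Matrix.star_apply, Matrix.conjTranspose_apply]
    · have e1 : ((!![0, 1; 1, 0] + !![0, -Complex.I; Complex.I, 0] : Matrix (Fin 2) (Fin 2) ℂ)) 0 1
          = 1 - Complex.I := by
        simp [Matrix.add_apply]; ring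
      show qf _ _ ≠ qf _ _ + qf _ _
      rw [e1]
      have e2 : (!![(0:ℂ), 1; 1, 0]) 0 1 = 1 := by simp
      have e3 : (!![(0:ℂ), -Complex.I; Complex.I, 0]) 0 1 = -Complex.I := by simp
      rw [e2, e3]
      simp only [Complex.sub_re, Complex.sub_im, Complex.one_re, Complex.one_im,
        Complex.I_re, Complex.I_im, Complex.neg_re, Complex.neg_im]
      norm_num [qf]
end
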